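/- Let 0 ≤ c < 0.5 and let D be a distribution over X × {0,1} that is non-degenerate with respect to groups S_1,...,S_m, capacity 2c, and a family F of functions X → [0,1] that is closed under group post-processing. Let F_EO ⊆ F be the set of functions in F satisfying equal opportunity. If the groups have equal base rates, i.e., E_{(x,y)∼D}[y | x ∈ S_i] = E_{(x,y)∼D}[y] for all i ∈ [m], then the maximizer over functions h ∈ F of capacity c of min_{i∈[m]} E_{(x,y)∼D}[h(x)y | x ∈ S_i] coincides with the maximizer over functions h ∈ F_EO of capacity c of E_{(x,y)∼D}[h(x)y]; in particular, each maximizer satisfies both properties and the two optimal values of the minimum per-group true positive count are equal. -/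

import Mathlib

open MeasureTheory Set

noncomputable section

namespace FairAlloc

variable {X : Type*} [MeasurableSpace X]

/-- Real value of a Boolean label `y`. -/
def yv (b : Bool) : ℝ := if b then 1 else 0

/-- `Pr_{(x,y)∼D}[x ∈ S]`. -/
def prIn (D : Measure (X × Bool)) (S : Set X) : ℝ :=
  (D (S ×ˢ (univ : Set Bool))).toReal

/-- `E_{(x,y)∼D}[φ(x,y)]`. -/
def ex (D : Measure (X × Bool)) (φ : X → Bool → ℝ) : ℝ :=
  ∫ z, φ z.1 z.2 ∂D

/-- `E_{(x,y)∼D}[φ(x,y) | x ∈ S]`. -/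
def exCond (D : Measure (X × Bool)) (S : Set X) (φ : X → Bool → ℝ) : ℝ :=
  (∫ z in S ×ˢ (univ : Set Bool), φ z.1 z.2 ∂D) / prIn D S

/-- `f` has capacity `c` under `D`: `E_{(x,y)∼D}[f(x)] = c`. -/
def HasCapacity (D : Measure (X × Bool)) (f : X → ℝ) (c : ℝ) : Prop :=
  ex D (fun x _ => f x) = c

/-- True positive count `E_{(x,y)∼D}[f(x)·y]`. -/
def tpc (D : Measure (X × Bool)) (f : X → ℝ) : ℝ :=
  ex D (fun x b => f x * yv b)

/-- Conditional true positive count `E_{(x,y)∼D}[f(x)·y | x ∈ S]`. -/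
def tpcCond (D : Measure (X × Bool)) (S : Set X) (f : X → ℝ) : ℝ :=
  exCond D S (fun x b => f x * yv b)

/-- Unnormalized restricted true positive count `E_{(x,y)∼D}[f(x)·y·1(x ∈ S)]`. -/
def tpcIn (D : Measure (X × Bool)) (S : Set X) (f : X → ℝ) : ℝ :=
  ∫ z in S ×ˢ (univ : Set Bool), f z.1 * yv z.2 ∂D

/-- `Pr_{(x,y)∼D}[y = 1]`. -/
def prY1 (D : Measure (X × Bool)) : ℝ :=
  (D ((univ : Set X) ×ˢ ({true} : Set Bool))).toReal

/-- `Pr_{(x,y)∼D}[x ∈ A | x ∈ S]`. -/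
def prCond (D : Measure (X × Bool)) (S A : Set X) : ℝ :=
  (D ((S ∩ A) ×ˢ (univ : Set Bool))).toReal / (D (S ×ˢ (univ : Set Bool))).toReal

/-- `τ(·, i)` is a randomized threshold with threshold `t` and tie value `γ`:
it is `1` above `t`, `γ` at `t`, and `0` below `t`. -/
def IsThresholdOn {m : ℕ} (τ : ℝ → Fin m → ℝ) (i : Fin m) (t γ : ℝ) : Prop :=
  (∀ r, t < r → τ r i = 1) ∧ τ t i = γ ∧ (∀ r, r < t → τ r i = 0)

/-- A randomized group threshold function: for each group `i` there are a threshold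
`t_i ∈ [0,1]` and a tie value `γ_i ∈ [0,1]`. -/
def IsRGTF {m : ℕ} (τ : ℝ → Fin m → ℝ) : Prop :=
  ∀ i, ∃ t ∈ Icc (0:ℝ) 1, ∃ γ ∈ Icc (0:ℝ) 1, IsThresholdOn τ i t γ

/-- `D` is non-degenerate w.r.t. groups `S`, capacity `c` and class `F`: every `f ∈ F`
with `Pr[f(x)=1] ≥ 1−c` has `E[y | f(x)=1, x ∈ S i] > 0` for every group `i`. -/
def NonDegenerate {m : ℕ} (D : Measure (X × Bool)) (S : Fin m → Set X)
    (c : ℝ) (F : Set (X → ℝ)) : Prop :=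
  ∀ f ∈ F, 1 - c ≤ prIn D {x | f x = 1} →
    ∀ i, 0 < exCond D ({x | f x = 1} ∩ S i) (fun _ b => yv b)

/-- `F` is closed under group post-processing: for every `f ∈ F` and every ([0,1]-valued,
measurable in each group slot) post-processing `τ`, the function `x ↦ τ(f(x), g(x))` is
in `F`. -/
def ClosedUnderGroupPostProc {m : ℕ} (F : Set (X → ℝ)) (g : X → Fin m) : Prop :=
  ∀ f ∈ F, ∀ τ : ℝ → Fin m → ℝ, (∀ i, Measurable fun r => τ r i) →
    (∀ i r, r ∈ Icc (0:ℝ) 1 → τ r i ∈ Icc (0:ℝ) 1) →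
    (fun x => τ (f x) (g x)) ∈ F

/-- `f ∈ F` has capacity `c` and maximizes `min_i E[h(x)y | x ∈ S i]` over capacity-`c`
functions `h ∈ F`. -/
def MaxMinFair {m : ℕ} (D : Measure (X × Bool)) (S : Fin m → Set X)
    (F : Set (X → ℝ)) (c : ℝ) (f : X → ℝ) : Prop :=
  f ∈ F ∧ HasCapacity D f c ∧
    ∀ h ∈ F, HasCapacity D h c →
      (⨅ i, tpcCond D (S i) h) ≤ ⨅ i, tpcCond D (S i) f

/-- `E_{(x,y)∼D}[f(x) | x ∈ S, y = 1]`. -/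
def exCondY1 (D : Measure (X × Bool)) (S : Set X) (f : X → ℝ) : ℝ :=
  (∫ z in S ×ˢ ({true} : Set Bool), f z.1 ∂D) / (D (S ×ˢ ({true} : Set Bool))).toReal

/-- Equal opportunity: `E[f(x) | x ∈ S i, y = 1]` is the same for all groups. -/
def EqualOpportunity {m : ℕ} (D : Measure (X × Bool)) (S : Fin m → Set X)
    (f : X → ℝ) : Prop :=
  ∀ i j, exCondY1 D (S i) f = exCondY1 D (S j) f

lemma measurable_yv : Measurable yv := measurable_from_top

lemma yv_nonneg (b : Bool) : 0 ≤ yv b := by cases b <;> simp [yv]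
lemma yv_le_one (b : Bool) : yv b ≤ 1 := by cases b <;> simp [yv]

lemma integrable_of_bnd (D : Measure (X × Bool)) [IsProbabilityMeasure D]
    (φ : X × Bool → ℝ) (hm : Measurable φ) (hb : ∀ z, |φ z| ≤ 1) :
    Integrable φ D := by
  refine (integrable_const (1:ℝ)).mono' hm.aestronglyMeasurable ?_
  exact Filter.Eventually.of_forall (fun z => by simpa using hb z)

lemma bool_univ : (univ : Set Bool) = {false} ∪ {true} := by
  ext b; cases b <;> simp

lemma setIntegral_mul_yv (D : Measure (X × Bool)) [IsProbabilityMeasure D]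
    (S : Set X) (hS : MeasurableSet S) (ψ : X → ℝ) (hψ : Measurable ψ)
    (hb : ∀ x, |ψ x| ≤ 1) :
    ∫ z in S ×ˢ (univ : Set Bool), ψ z.1 * yv z.2 ∂D
      = ∫ z in S ×ˢ ({true} : Set Bool), ψ z.1 ∂D := by
  have hint : Integrable (fun z : X × Bool => ψ z.1 * yv z.2) D := by
    refine integrable_of_bnd D _ ((hψ.comp measurable_fst).mul
      (measurable_yv.comp measurable_snd)) (fun z => ?_)
    rw [abs_mul]
    calc |ψ z.1| * |yv z.2| ≤ 1 * 1 := by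
          apply mul_le_mul (hb z.1) ?_ (abs_nonneg _) zero_le_one
          rw [abs_of_nonneg (yv_nonneg _)]; exact yv_le_one _
      _ = 1 := by ring
  have hsplit : S ×ˢ (univ : Set Bool) = S ×ˢ ({false} : Set Bool) ∪ S ×ˢ ({true} : Set Bool) := by
    rw [bool_univ, prod_union]
  rw [hsplit, setIntegral_union ?_ (hS.prod (measurableSet_singleton _)) hint.integrableOn hint.integrableOn]
  · have h0 : ∫ z in S ×ˢ ({false} : Set Bool), ψ z.1 * yv z.2 ∂D = 0 := by
      apply setIntegral_eq_zero_of_forall_eq_zero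
      rintro ⟨x, b⟩ ⟨-, hb2⟩
      simp only [mem_singleton_iff] at hb2
      simp [hb2, yv]
    have h1 : ∫ z in S ×ˢ ({true} : Set Bool), ψ z.1 * yv z.2 ∂D
        = ∫ z in S ×ˢ ({true} : Set Bool), ψ z.1 ∂D := by
      apply setIntegral_congr_fun (hS.prod (measurableSet_singleton _))
      rintro ⟨x, b⟩ ⟨-, hb2⟩
      simp only [mem_singleton_iff] at hb2
      simp [hb2, yv]
    rw [h0, h1, zero_add]
  · rw [disjoint_iff_inter_eq_empty]
    ext ⟨x, b⟩
    simp only [mem_inter_iff, mem_prod, mem_singleton_iff, mem_empty_iff_false, iff_false]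
    rintro ⟨⟨-, h1⟩, ⟨-, h2⟩⟩; rw [h1] at h2; exact Bool.false_ne_true h2

lemma setIntegral_yv (D : Measure (X × Bool)) [IsProbabilityMeasure D]
    (S : Set X) (hS : MeasurableSet S) :
    ∫ z in S ×ˢ (univ : Set Bool), yv z.2 ∂D = (D (S ×ˢ ({true} : Set Bool))).toReal := by
  have := setIntegral_mul_yv D S hS (fun _ => 1) measurable_const (fun _ => by norm_num)
  simp only [one_mul] at this
  rw [this, setIntegral_const, smul_eq_mul, mul_one]; rfl

lemma integral_partition {m : ℕ} (D : Measure (X × Bool)) [IsProbabilityMeasure D]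
    (S : Fin m → Set X) (hSdisj : ∀ i j, i ≠ j → Disjoint (S i) (S j))
    (hScover : (⋃ i, S i) = univ) (hSmeas : ∀ i, MeasurableSet (S i))
    (φ : X × Bool → ℝ) (hint : Integrable φ D) :
    ∫ z, φ z ∂D = ∑ i, ∫ z in S i ×ˢ (univ : Set Bool), φ z ∂D := by
  have hU : (⋃ i, S i ×ˢ (univ : Set Bool)) = univ := by
    rw [← iUnion_prod_const, hScover, univ_prod_univ]
  have := integral_iUnion (μ := D) (s := fun i => S i ×ˢ (univ : Set Bool))
    (fun i => (hSmeas i).prod MeasurableSet.univ)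
    (fun i j hij => (Disjoint.set_prod_left (hSdisj i j hij) _ _))
    (by rw [hU]; exact hint.integrableOn)
  rw [hU] at this
  rw [Measure.restrict_univ] at this
  rw [this, tsum_fintype]

lemma sum_w_eq_one {m : ℕ} (D : Measure (X × Bool)) [IsProbabilityMeasure D]
    (S : Fin m → Set X) (hSdisj : ∀ i j, i ≠ j → Disjoint (S i) (S j))
    (hScover : (⋃ i, S i) = univ) (hSmeas : ∀ i, MeasurableSet (S i)) :
    ∑ i, (D (S i ×ˢ (univ : Set Bool))).toReal = 1 := by
  have := integral_partition D S hSdisj hScover hSmeas (fun _ => (1:ℝ)) (integrable_const 1)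
  simp only [setIntegral_const, smul_eq_mul, mul_one] at this
  show ∑ i, D.real (S i ×ˢ (univ : Set Bool)) = 1
  rw [← this]
  simp

lemma fin_min_exists {m : ℕ} (hm : 0 < m) (F : Fin m → ℝ) :
    ∃ i, ∀ j, F i ≤ F j := by
  obtain ⟨i, -, hi⟩ := Finset.exists_min_image Finset.univ F ⟨⟨0, hm⟩, Finset.mem_univ _⟩
  exact ⟨i, fun j => hi j (Finset.mem_univ _)⟩

lemma fin_iInf_eq {m : ℕ} (hm : 0 < m) (F : Fin m → ℝ) (i : Fin m)
    (hi : ∀ j, F i ≤ F j) : iInf F = F i := by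
  have : Nonempty (Fin m) := ⟨⟨0, hm⟩⟩
  exact le_antisymm (ciInf_le (Set.Finite.bddBelow (Set.finite_range F)) i) (le_ciInf hi)

lemma hpos_div {a b : ℝ} (ha : 0 ≤ a) (hb : 0 ≤ b) (h : 0 < a / b) : 0 < a ∧ 0 < b := by
  rcases div_pos_iff.mp h with ⟨h1, h2⟩ | ⟨h1, h2⟩
  · exact ⟨h1, h2⟩
  · exact absurd h2 (not_lt.mpr hb)

open Classical in
lemma setIntegral_indicator_prod (D : Measure (X × Bool)) [IsProbabilityMeasure D]
    (S : Set X) (B : Set Bool) (A : Set X) (hA : MeasurableSet A) :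
    ∫ z in S ×ˢ B, (if z.1 ∈ A then (1:ℝ) else 0) ∂D = (D ((S ∩ A) ×ˢ B)).toReal := by
  have heq : (fun z : X × Bool => if z.1 ∈ A then (1:ℝ) else 0)
      = (A ×ˢ (univ : Set Bool)).indicator (fun _ => (1:ℝ)) := by
    funext z
    by_cases hz : z.1 ∈ A
    · rw [if_pos hz, indicator_of_mem (by simp [hz])]
    · rw [if_neg hz, indicator_of_notMem (by simp [hz])]
  rw [heq, setIntegral_indicator (hA.prod MeasurableSet.univ)]
  have : S ×ˢ B ∩ A ×ˢ (univ : Set Bool) = (S ∩ A) ×ˢ B := by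
    rw [prod_inter_prod, inter_univ]
  rw [this, setIntegral_const, smul_eq_mul, mul_one]; rfl

open Classical in
lemma setIntegral_add_indicator (D : Measure (X × Bool)) [IsProbabilityMeasure D]
    (S : Set X) (hS : MeasurableSet S) (B : Set Bool) (A : Set X) (hA : MeasurableSet A)
    (ψ : X → ℝ) (hψ : Measurable ψ) (hb : ∀ x, |ψ x| ≤ 1) (ε : ℝ) :
    ∫ z in S ×ˢ B, (ψ z.1 + ε * (if z.1 ∈ A then 1 else 0)) ∂D
      = (∫ z in S ×ˢ B, ψ z.1 ∂D) + ε * (D ((S ∩ A) ×ˢ B)).toReal := by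
  have h1 : Integrable (fun z : X × Bool => ψ z.1) D :=
    integrable_of_bnd D _ (hψ.comp measurable_fst) (fun z => hb z.1)
  have h2 : Integrable (fun z : X × Bool => ε * (if z.1 ∈ A then (1:ℝ) else 0)) D := by
    refine Integrable.const_mul ?_ ε
    refine integrable_of_bnd D _ ?_ (fun z => by split_ifs <;> norm_num)
    exact (measurable_const.ite (measurable_fst hA) measurable_const)
  rw [integral_add h1.integrableOn h2.integrableOn, integral_const_mul,
    setIntegral_indicator_prod D S B A hA]

lemma prIn_lt_half_ge (D : Measure (X × Bool)) [IsProbabilityMeasure D]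
    (f : X → ℝ) (hm : Measurable f) (hb : ∀ x, f x ∈ Icc (0:ℝ) 1) (c : ℝ)
    (hcap : ∫ z, f z.1 ∂D = c) :
    1 - 2 * c ≤ (D ({x | f x < 1/2} ×ˢ (univ : Set Bool))).toReal := by
  have hint : Integrable (fun z : X × Bool => f z.1) D :=
    integrable_of_bnd D _ (hm.comp measurable_fst)
      (fun z => abs_le.2 ⟨by linarith [(hb z.1).1], (hb z.1).2⟩)
  have hmk := mul_meas_ge_le_integral_of_nonneg
    (Filter.Eventually.of_forall (fun z : X × Bool => (hb z.1).1)) hint (1/2)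
  rw [hcap] at hmk
  have hset : {z : X × Bool | 1/2 ≤ f z.1} = {x | 1/2 ≤ f x} ×ˢ (univ : Set Bool) := by
    ext z; simp [mem_prod]
  rw [hset] at hmk
  have hA : MeasurableSet ({x | 1/2 ≤ f x} ×ˢ (univ : Set Bool)) :=
    ((measurableSet_le measurable_const hm).prod MeasurableSet.univ)
  have hcompl : {x | f x < 1/2} ×ˢ (univ : Set Bool) = ({x | 1/2 ≤ f x} ×ˢ (univ : Set Bool))ᶜ := by
    ext z; simp [mem_prod, not_le]
  rw [hcompl, measure_compl hA (measure_ne_top D _), measure_univ,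
    ENNReal.toReal_sub_of_le prob_le_one ENNReal.one_ne_top, ENNReal.toReal_one]
  simp only [Measure.real] at hmk
  linarith

lemma Nt_le (D : Measure (X × Bool)) [IsProbabilityMeasure D]
    (S : Set X) (hS : MeasurableSet S) (f : X → ℝ) (hm : Measurable f)
    (hb : ∀ x, f x ∈ Icc (0:ℝ) 1) :
    0 ≤ ∫ z in S ×ˢ ({true} : Set Bool), f z.1 ∂D ∧
    (∫ z in S ×ˢ ({true} : Set Bool), f z.1 ∂D) ≤ ∫ z in S ×ˢ (univ : Set Bool), f z.1 ∂D ∧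
    (∫ z in S ×ˢ (univ : Set Bool), f z.1 ∂D) ≤ (D (S ×ˢ (univ : Set Bool))).toReal := by
  have hint : Integrable (fun z : X × Bool => f z.1) D :=
    integrable_of_bnd D _ (hm.comp measurable_fst)
      (fun z => abs_le.2 ⟨by linarith [(hb z.1).1], (hb z.1).2⟩)
  refine ⟨setIntegral_nonneg (hS.prod (measurableSet_singleton _)) (fun z _ => (hb z.1).1), ?_, ?_⟩
  · refine setIntegral_mono_set hint.integrableOn
      (Filter.Eventually.of_forall (fun z => (hb z.1).1)) ?_
    exact HasSubset.Subset.eventuallyLE (prod_mono_right (subset_univ _))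
  · have hn := norm_setIntegral_le_of_norm_le_const (μ := D) (s := S ×ˢ (univ : Set Bool))
      (f := fun z : X × Bool => f z.1) (C := 1) (measure_lt_top D _)
      (fun z _ => by rw [Real.norm_eq_abs]; exact abs_le.2 ⟨by linarith [(hb z.1).1], (hb z.1).2⟩)
    rw [Real.norm_eq_abs] at hn
    calc (∫ z in S ×ˢ (univ : Set Bool), f z.1 ∂D)
        ≤ |∫ z in S ×ˢ (univ : Set Bool), f z.1 ∂D| := le_abs_self _
      _ ≤ 1 * (D (S ×ˢ (univ : Set Bool))).toReal := hn
      _ = (D (S ×ˢ (univ : Set Bool))).toReal := one_mul _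

set_option maxHeartbeats 1600000

/-- under non-degeneracy (at capacity `2c`, `0 ≤ c < 1/2`), closure under
group post-processing and equal base rates, the capacity-`c` max-min fair maximizer and
the capacity-`c` maximizer of the true positive count under equal opportunity coincide:
each satisfies both properties and the two optimal values of the minimum per-group true
positive count agree. -/
theorem maxMinFair_eq_equalOpportunity_of_equal_base_rates
    {X : Type*} [MeasurableSpace X] {m : ℕ} (hm : 0 < m)
    (D : Measure (X × Bool)) [IsProbabilityMeasure D]
    (S : Fin m → Set X)
    (hSdisj : ∀ i j, i ≠ j → Disjoint (S i) (S j)) (hScover : (⋃ i, S i) = univ)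
    (hSmeas : ∀ i, MeasurableSet (S i))
    (g : X → Fin m) (hg : ∀ x, x ∈ S (g x))
    (F : Set (X → ℝ))
    (hFrange : ∀ f ∈ F, ∀ x, f x ∈ Icc (0:ℝ) 1)
    (hFmeas : ∀ f ∈ F, Measurable f)
    (c : ℝ) (hc0 : 0 ≤ c) (hc : c < 1 / 2)
    (hND : NonDegenerate D S (2 * c) F)
    (hclosed : ClosedUnderGroupPostProc F g)
    (hbase : ∀ i, exCond D (S i) (fun _ b => yv b) = ex D (fun _ b => yv b))
    (f : X → ℝ) (hf : MaxMinFair D S F c f)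
    (h : X → ℝ) (hhF : h ∈ F) (hhEO : EqualOpportunity D S h)
    (hhcap : HasCapacity D h c)
    (hhmax : ∀ h' ∈ F, EqualOpportunity D S h' → HasCapacity D h' c →
      tpc D h' ≤ tpc D h) :
    EqualOpportunity D S f ∧
    (∀ h' ∈ F, EqualOpportunity D S h' → HasCapacity D h' c → tpc D h' ≤ tpc D f) ∧
    MaxMinFair D S F c h ∧
    (⨅ i, tpcCond D (S i) f) = ⨅ i, tpcCond D (S i) h := by
  classical
  have i0 : Fin m := ⟨0, hm⟩
  -- group of x determines membership
  have hgS : ∀ i x, x ∈ S i → g x = i := by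
    intro i x hx
    by_contra hne'
    exact Set.disjoint_left.mp (hSdisj (g x) i hne') (hg x) hx
  have hbnd : ∀ f' ∈ F, ∀ x, |f' x| ≤ 1 := fun f' hf' x =>
    abs_le.2 ⟨by linarith [(hFrange f' hf' x).1], (hFrange f' hf' x).2⟩
  -- basic formulas
  have htpcCond : ∀ f' ∈ F, ∀ i, tpcCond D (S i) f'
      = (∫ z in S i ×ˢ ({true} : Set Bool), f' z.1 ∂D) / (D (S i ×ˢ (univ : Set Bool))).toReal := by
    intro f' hf' i
    simp only [tpcCond, exCond, prIn]
    rw [setIntegral_mul_yv D (S i) (hSmeas i) f' (hFmeas f' hf') (hbnd f' hf')]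
  have hmulbnd : ∀ f' ∈ F, ∀ z : X × Bool, |f' z.1 * yv z.2| ≤ 1 := by
    intro f' hf' z
    rw [abs_mul]
    calc |f' z.1| * |yv z.2| ≤ 1 * 1 := by
          apply mul_le_mul (hbnd f' hf' z.1) ?_ (abs_nonneg _) zero_le_one
          rw [abs_of_nonneg (yv_nonneg _)]; exact yv_le_one _
      _ = 1 := by ring
  have htpc : ∀ f' ∈ F, tpc D f' = ∑ i, ∫ z in S i ×ˢ ({true} : Set Bool), f' z.1 ∂D := by
    intro f' hf'
    simp only [tpc, ex]
    have hint : Integrable (fun z : X × Bool => f' z.1 * yv z.2) D :=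
      integrable_of_bnd D (fun z => f' z.1 * yv z.2)
        (((hFmeas f' hf').comp measurable_fst).mul (measurable_yv.comp measurable_snd))
        (hmulbnd f' hf')
    rw [integral_partition D S hSdisj hScover hSmeas (fun z => f' z.1 * yv z.2) hint]
    exact Finset.sum_congr rfl fun i _ =>
      setIntegral_mul_yv D (S i) (hSmeas i) f' (hFmeas f' hf') (hbnd f' hf')
  have hcap_eq : ∀ f' ∈ F, ex D (fun x _ => f' x)
      = ∑ i, ∫ z in S i ×ˢ (univ : Set Bool), f' z.1 ∂D := by
    intro f' hf'
    simp only [ex]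
    have hint : Integrable (fun z : X × Bool => f' z.1) D :=
      integrable_of_bnd D (fun z => f' z.1) ((hFmeas f' hf').comp measurable_fst)
        (fun z => hbnd f' hf' z.1)
    exact integral_partition D S hSdisj hScover hSmeas (fun z => f' z.1) hint
  have hexCond_yv : ∀ T : Set X, MeasurableSet T → exCond D T (fun _ b => yv b)
      = (D (T ×ˢ ({true} : Set Bool))).toReal / (D (T ×ˢ (univ : Set Bool))).toReal := by
    intro T hT
    simp only [exCond, prIn]
    rw [setIntegral_yv D T hT]
  -- constant one is in F
  have h1F : (fun _ : X => (1:ℝ)) ∈ F := by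
    have := hclosed f hf.1 (fun _ _ => 1) (fun _ => measurable_const)
      (fun i r _ => ⟨zero_le_one, le_rfl⟩)
    exact this
  have hpr1 : 1 - 2 * c ≤ prIn D {x | (fun _ : X => (1:ℝ)) x = 1} := by
    have hset : {x : X | (fun _ : X => (1:ℝ)) x = 1} = univ := by ext x; simp
    rw [hset]
    simp only [prIn, univ_prod_univ, measure_univ, ENNReal.toReal_one]
    linarith
  have hndeg1 := hND (fun _ => 1) h1F hpr1
  have hwQ : ∀ i, 0 < (D (S i ×ˢ ({true} : Set Bool))).toReal
      ∧ 0 < (D (S i ×ˢ (univ : Set Bool))).toReal := by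
    intro i
    have h := hndeg1 i
    have hset : {x | (fun _ : X => (1:ℝ)) x = 1} ∩ S i = S i := by
      ext x; simp
    rw [hset, hexCond_yv (S i) (hSmeas i)] at h
    exact hpos_div ENNReal.toReal_nonneg ENNReal.toReal_nonneg h
  -- base rates
  have hexyv : ex D (fun _ b => yv b) = prY1 D := by
    simp only [ex, prY1]
    have h := setIntegral_yv D univ MeasurableSet.univ
    rw [univ_prod_univ, setIntegral_univ] at h
    exact h
  have hbase' : ∀ i, (D (S i ×ˢ ({true} : Set Bool))).toReal
      = prY1 D * (D (S i ×ˢ (univ : Set Bool))).toReal := by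
    intro i
    have h := hbase i
    rw [hexCond_yv (S i) (hSmeas i), hexyv, div_eq_iff (ne_of_gt (hwQ i).2)] at h
    rw [h, mul_comm]
  have hp : 0 < prY1 D := by
    have h1 := (hwQ i0).1
    rw [hbase' i0] at h1
    by_contra h'
    push_neg at h'
    nlinarith [(hwQ i0).2]
  -- EO characterization
  have hexCondY1 : ∀ f' ∈ F, ∀ i, exCondY1 D (S i) f' = tpcCond D (S i) f' / prY1 D := by
    intro f' hf' i
    simp only [exCondY1]
    rw [hbase' i, htpcCond f' hf' i, div_div, mul_comm]
  have hEOiff : ∀ f' ∈ F, (EqualOpportunity D S f'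
      ↔ ∀ i j, tpcCond D (S i) f' = tpcCond D (S j) f') := by
    intro f' hf'
    simp only [EqualOpportunity]
    constructor
    · intro hEO i j
      have h2 := hEO i j
      rw [hexCondY1 f' hf' i, hexCondY1 f' hf' j,
        div_eq_div_iff hp.ne' hp.ne'] at h2
      exact mul_right_cancel₀ (ne_of_gt hp) h2
    · intro hT i j
      rw [hexCondY1 f' hf' i, hexCondY1 f' hf' j, hT i j]
  -- Nt = tpcCond * w
  have hNt : ∀ f' ∈ F, ∀ i, (∫ z in S i ×ˢ ({true} : Set Bool), f' z.1 ∂D)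
      = tpcCond D (S i) f' * (D (S i ×ˢ (univ : Set Bool))).toReal := by
    intro f' hf' i
    rw [htpcCond f' hf' i, div_mul_cancel₀ _ (ne_of_gt (hwQ i).2)]
  have hsum_w : ∑ i, (D (S i ×ˢ (univ : Set Bool))).toReal = 1 :=
    sum_w_eq_one D S hSdisj hScover hSmeas
  have hEO_tpc : ∀ f' ∈ F, EqualOpportunity D S f' → ∀ i, tpc D f' = tpcCond D (S i) f' := by
    intro f' hf' hEO i
    have hconst := (hEOiff f' hf').1 hEO
    rw [htpc f' hf']
    calc ∑ j, ∫ z in S j ×ˢ ({true} : Set Bool), f' z.1 ∂D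
        = ∑ j, tpcCond D (S i) f' * (D (S j ×ˢ (univ : Set Bool))).toReal := by
          refine Finset.sum_congr rfl fun j _ => ?_
          rw [hNt f' hf' j, hconst j i]
      _ = tpcCond D (S i) f' * ∑ j, (D (S j ×ˢ (univ : Set Bool))).toReal := by
          rw [Finset.mul_sum]
      _ = tpcCond D (S i) f' := by rw [hsum_w, mul_one]
  have hEO_inf : ∀ f' ∈ F, EqualOpportunity D S f'
      → (⨅ i, tpcCond D (S i) f') = tpc D f' := by
    intro f' hf' hEO
    obtain ⟨j₀, hj₀⟩ := fin_min_exists hm (fun i => tpcCond D (S i) f')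
    rw [fin_iInf_eq hm (fun i => tpcCond D (S i) f') j₀ hj₀]
    exact (hEO_tpc f' hf' hEO j₀).symm
  -- THE KEY STEP: f is EO
  have hfEO : EqualOpportunity D S f := by
    rw [hEOiff f hf.1]
    by_contra hne2
    push_neg at hne2
    obtain ⟨iA, jA, hij⟩ := hne2
    -- minimum of tpcCond for f
    obtain ⟨i₀, hmin₀⟩ := fin_min_exists hm (fun i => tpcCond D (S i) f)
    obtain ⟨V, hVdef⟩ : ∃ V : ℝ, V = tpcCond D (S i₀) f := ⟨_, rfl⟩
    have hmin : ∀ j, V ≤ tpcCond D (S j) f := by rw [hVdef]; exact hmin₀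
    have hinf_f : iInf (fun i => tpcCond D (S i) f) = V := by
      rw [hVdef]; exact fin_iInf_eq hm _ i₀ hmin₀
    -- bounds on tpcCond f
    have hNtb : ∀ i, 0 ≤ (∫ z in S i ×ˢ ({true} : Set Bool), f z.1 ∂D)
        ∧ (∫ z in S i ×ˢ ({true} : Set Bool), f z.1 ∂D) ≤ (∫ z in S i ×ˢ (univ : Set Bool), f z.1 ∂D)
        ∧ (∫ z in S i ×ˢ (univ : Set Bool), f z.1 ∂D) ≤ (D (S i ×ˢ (univ : Set Bool))).toReal :=
      fun i => Nt_le D (S i) (hSmeas i) f (hFmeas f hf.1) (hFrange f hf.1)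
    have hT01 : ∀ i, 0 ≤ tpcCond D (S i) f ∧ tpcCond D (S i) f ≤ 1 := by
      intro i
      rw [htpcCond f hf.1 i]
      constructor
      · exact div_nonneg (hNtb i).1 ENNReal.toReal_nonneg
      · rw [div_le_one (hwQ i).2]
        exact le_trans (hNtb i).2.1 (hNtb i).2.2
    have hV0 : 0 ≤ V := by rw [hVdef]; exact (hT01 i₀).1
    have hexB : ∃ j, V < tpcCond D (S j) f := by
      by_contra hall
      push_neg at hall
      have hallV : ∀ i, tpcCond D (S i) f = V := fun i => le_antisymm (hall i) (hmin i)
      exact hij (by rw [hallV iA, hallV jA])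
    obtain ⟨jB, hjB⟩ := hexB
    -- the low region
    obtain ⟨Flt, hFltdef⟩ : ∃ A : Set X, A = {x | f x < 1/2} := ⟨_, rfl⟩
    have hFltm : MeasurableSet Flt := by
      rw [hFltdef]; exact measurableSet_lt (hFmeas f hf.1) measurable_const
    -- positivity of positives in the low region of each group (non-degeneracy)
    have hQpos : ∀ i, 0 < (D ((S i ∩ Flt) ×ˢ ({true} : Set Bool))).toReal := by
      have hf₀F : (fun x => if f x < 1/2 then (1:ℝ) else 0) ∈ F := by
        have := hclosed f hf.1 (fun r _ => if r < 1/2 then 1 else 0)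
          (fun i => Measurable.ite (measurableSet_lt measurable_id measurable_const)
            measurable_const measurable_const)
          (fun i r _ => by split_ifs <;> norm_num)
        exact this
      have hset : {x | (fun x => if f x < 1/2 then (1:ℝ) else 0) x = 1} = Flt := by
        ext x
        simp only [hFltdef, mem_setOf_eq]
        constructor
        · intro hx1
          by_contra hxn
          rw [if_neg hxn] at hx1
          norm_num at hx1
        · intro hxlt
          rw [if_pos hxlt]
      have hpr : 1 - 2 * c ≤ prIn D {x | (fun x => if f x < 1/2 then (1:ℝ) else 0) x = 1} := by
        rw [hset, hFltdef]
        simp only [prIn]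
        exact prIn_lt_half_ge D f (hFmeas f hf.1) (hFrange f hf.1) c hf.2.1
      intro i
      have h2 := hND _ hf₀F hpr i
      rw [hset, hexCond_yv (Flt ∩ S i) (hFltm.inter (hSmeas i))] at h2
      have h3 := (hpos_div ENNReal.toReal_nonneg ENNReal.toReal_nonneg h2).1
      rwa [inter_comm] at h3
    -- quantities
    obtain ⟨PA, hPAdef⟩ : ∃ P : ℝ, P = ∑ i, if tpcCond D (S i) f ≤ V
      then (D ((S i ∩ Flt) ×ˢ (univ : Set Bool))).toReal else 0 := ⟨_, rfl⟩
    obtain ⟨CB, hCBdef⟩ : ∃ C : ℝ, C = ∑ i, if tpcCond D (S i) f ≤ V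
      then 0 else (∫ z in S i ×ˢ (univ : Set Bool), f z.1 ∂D) := ⟨_, rfl⟩
    have hPA0 : 0 ≤ PA := by
      rw [hPAdef]
      apply Finset.sum_nonneg
      intro i _
      split_ifs
      · exact ENNReal.toReal_nonneg
      · exact le_rfl
    have hCB_pos : 0 < CB := by
      have hterm : ∀ i ∈ Finset.univ, (0:ℝ) ≤ if tpcCond D (S i) f ≤ V
          then 0 else (∫ z in S i ×ˢ (univ : Set Bool), f z.1 ∂D) := by
        intro i _
        split_ifs
        · exact le_rfl
        · exact le_trans (hNtb i).1 (hNtb i).2.1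
      have hjBterm : (0:ℝ) < if tpcCond D (S jB) f ≤ V
          then 0 else (∫ z in S jB ×ˢ (univ : Set Bool), f z.1 ∂D) := by
        rw [if_neg (not_le.mpr hjB)]
        have h4 : 0 < (∫ z in S jB ×ˢ ({true} : Set Bool), f z.1 ∂D) := by
          rw [hNt f hf.1 jB]
          exact mul_pos (lt_of_le_of_lt hV0 hjB) (hwQ jB).2
        exact lt_of_lt_of_le h4 (hNtb jB).2.1
      calc (0:ℝ) < _ := hjBterm
        _ ≤ CB := by rw [hCBdef]; exact Finset.single_le_sum hterm (Finset.mem_univ jB)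
    -- the gap
    obtain ⟨jg, hjg⟩ := fin_min_exists hm
      (fun j => if tpcCond D (S j) f ≤ V then 1 else tpcCond D (S j) f - V)
    have hjg' : ∀ j, (if tpcCond D (S jg) f ≤ V then 1 else tpcCond D (S jg) f - V)
        ≤ (if tpcCond D (S j) f ≤ V then 1 else tpcCond D (S j) f - V) := hjg
    obtain ⟨gap, hgapdef⟩ : ∃ gp : ℝ,
      gp = if tpcCond D (S jg) f ≤ V then 1 else tpcCond D (S jg) f - V := ⟨_, rfl⟩
    have hgap_pos : 0 < gap := by
      rw [hgapdef]
      split_ifs with h4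
      · norm_num
      · linarith [not_le.mp h4]
    have hM : 0 < min 1 gap := lt_min one_pos hgap_pos
    -- epsilon and delta
    obtain ⟨ε, hεdef⟩ : ∃ e : ℝ, e = min (1/2) (CB * min 1 gap / (2 * (PA + 1))) := ⟨_, rfl⟩
    have hε_pos : 0 < ε := by
      rw [hεdef]
      exact lt_min (by norm_num)
        (div_pos (mul_pos hCB_pos hM) (by linarith : (0:ℝ) < 2 * (PA + 1)))
    have hε_half : ε ≤ 1/2 := by rw [hεdef]; exact min_le_left _ _
    obtain ⟨δ, hδdef⟩ : ∃ d : ℝ, d = ε * PA / CB := ⟨_, rfl⟩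
    have hδ0 : 0 ≤ δ := by
      rw [hδdef]
      exact div_nonneg (mul_nonneg hε_pos.le hPA0) hCB_pos.le
    have hδM : δ ≤ min 1 gap / 2 := by
      have h1 : ε ≤ CB * min 1 gap / (2 * (PA + 1)) := by
        rw [hεdef]; exact min_le_right _ _
      have h2 : ε * PA ≤ (CB * min 1 gap / (2 * (PA + 1))) * PA :=
        mul_le_mul_of_nonneg_right h1 hPA0
      have h3 : (CB * min 1 gap / (2 * (PA + 1))) * PA ≤ CB * (min 1 gap / 2) := by
        rw [div_mul_eq_mul_div, div_le_iff₀ (by positivity : (0:ℝ) < 2 * (PA + 1))]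
        nlinarith [mul_nonneg (mul_nonneg hCB_pos.le hM.le) hPA0,
          mul_nonneg hCB_pos.le hM.le]
      rw [hδdef, div_le_iff₀ hCB_pos]
      nlinarith
    have hδ1 : δ < 1 := by
      have := min_le_left 1 gap
      linarith
    have hδgap : δ < gap := by
      have := min_le_right 1 gap
      linarith
    -- the post-processing
    obtain ⟨τ, hτdef⟩ : ∃ t : ℝ → Fin m → ℝ, t = fun r i => if tpcCond D (S i) f ≤ V
      then (if r < 1/2 then r + ε else r) else (1 - δ) * r := ⟨_, rfl⟩
    have hτmeas : ∀ i, Measurable fun r => τ r i := by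
      intro i
      by_cases hi : tpcCond D (S i) f ≤ V <;> simp only [hτdef, hi, if_true, if_false]
      · exact Measurable.ite (measurableSet_lt measurable_id measurable_const)
          (measurable_id.add_const ε) measurable_id
      · exact measurable_id.const_mul _
    have hτrange : ∀ i r, r ∈ Icc (0:ℝ) 1 → τ r i ∈ Icc (0:ℝ) 1 := by
      intro i r hr
      obtain ⟨hr0, hr1⟩ := hr
      simp only [hτdef]
      split_ifs with h4 h5
      · exact ⟨by linarith, by linarith⟩
      · exact ⟨hr0, hr1⟩
      · constructor
        · exact mul_nonneg (by linarith) hr0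
        · calc (1 - δ) * r ≤ 1 * 1 :=
              mul_le_mul (by linarith) hr1 hr0 zero_le_one
            _ = 1 := one_mul 1
    obtain ⟨h₂, hh₂def⟩ : ∃ k : X → ℝ, k = fun x => τ (f x) (g x) := ⟨_, rfl⟩
    have hh₂F : h₂ ∈ F := by rw [hh₂def]; exact hclosed f hf.1 τ hτmeas hτrange
    -- groupwise rewriting
    have hcong : ∀ (i : Fin m) (B : Set Bool), MeasurableSet B →
        ∫ z in S i ×ˢ B, h₂ z.1 ∂D = ∫ z in S i ×ˢ B, τ (f z.1) i ∂D := by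
      intro i B hB
      apply setIntegral_congr_fun ((hSmeas i).prod hB)
      rintro ⟨x, b⟩ ⟨hx, -⟩
      simp only [hh₂def]
      rw [hgS i x hx]
    have hpieceA : ∀ i, tpcCond D (S i) f ≤ V → ∀ B : Set Bool, MeasurableSet B →
        ∫ z in S i ×ˢ B, τ (f z.1) i ∂D
          = (∫ z in S i ×ˢ B, f z.1 ∂D) + ε * (D ((S i ∩ Flt) ×ˢ B)).toReal := by
      intro i hi B hB
      have heq : ∀ z : X × Bool, τ (f z.1) i
          = f z.1 + ε * (if z.1 ∈ Flt then 1 else 0) := by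
        intro z
        simp only [hτdef, if_pos hi, hFltdef, mem_setOf_eq]
        split_ifs with h4 <;> ring
      simp only [heq]
      exact setIntegral_add_indicator D (S i) (hSmeas i) B Flt hFltm f
        (hFmeas f hf.1) (hbnd f hf.1) ε
    have hpieceB : ∀ i, ¬ tpcCond D (S i) f ≤ V → ∀ B : Set Bool, MeasurableSet B →
        ∫ z in S i ×ˢ B, τ (f z.1) i ∂D = (1 - δ) * ∫ z in S i ×ˢ B, f z.1 ∂D := by
      intro i hi B hB
      simp only [hτdef, if_neg hi]
      exact integral_const_mul _ _
    -- h₂ has capacity c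
    have hfc : ∑ i, (∫ z in S i ×ˢ (univ : Set Bool), f z.1 ∂D) = c := by
      rw [← hcap_eq f hf.1]
      exact hf.2.1
    have hh₂cap : HasCapacity D h₂ c := by
      show ex D (fun x _ => h₂ x) = c
      rw [hcap_eq h₂ hh₂F]
      have hterm : ∀ i, ∫ z in S i ×ˢ (univ : Set Bool), h₂ z.1 ∂D
          = (∫ z in S i ×ˢ (univ : Set Bool), f z.1 ∂D)
            + ((if tpcCond D (S i) f ≤ V
                then ε * (D ((S i ∩ Flt) ×ˢ (univ : Set Bool))).toReal else 0)
              - (if tpcCond D (S i) f ≤ V then 0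
                else δ * (∫ z in S i ×ˢ (univ : Set Bool), f z.1 ∂D))) := by
        intro i
        rw [hcong i univ MeasurableSet.univ]
        by_cases hi : tpcCond D (S i) f ≤ V
        · rw [hpieceA i hi univ MeasurableSet.univ, if_pos hi, if_pos hi]
          ring
        · rw [hpieceB i hi univ MeasurableSet.univ, if_neg hi, if_neg hi]
          ring
      rw [Finset.sum_congr rfl (fun i _ => hterm i), Finset.sum_add_distrib,
        Finset.sum_sub_distrib, hfc]
      have hsum1 : ∑ i, (if tpcCond D (S i) f ≤ V
          then ε * (D ((S i ∩ Flt) ×ˢ (univ : Set Bool))).toReal else 0) = ε * PA := by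
        rw [hPAdef, Finset.mul_sum]
        refine Finset.sum_congr rfl fun i _ => ?_
        split_ifs
        · rfl
        · rw [mul_zero]
      have hsum2 : ∑ i, (if tpcCond D (S i) f ≤ V then 0
          else δ * (∫ z in S i ×ˢ (univ : Set Bool), f z.1 ∂D)) = δ * CB := by
        rw [hCBdef, Finset.mul_sum]
        refine Finset.sum_congr rfl fun i _ => ?_
        split_ifs
        · rw [mul_zero]
        · rfl
      rw [hsum1, hsum2]
      have hδCB : δ * CB = ε * PA := by
        rw [hδdef, div_mul_cancel₀ _ (ne_of_gt hCB_pos)]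
      linarith
    -- every group strictly improves over V
    have hT'gt : ∀ i, V < tpcCond D (S i) h₂ := by
      intro i
      rw [htpcCond h₂ hh₂F i, hcong i {true} (measurableSet_singleton _)]
      by_cases hi : tpcCond D (S i) f ≤ V
      · rw [hpieceA i hi {true} (measurableSet_singleton _)]
        have hTiV : tpcCond D (S i) f = V := le_antisymm hi (hmin i)
        have hNt_i : (∫ z in S i ×ˢ ({true} : Set Bool), f z.1 ∂D)
            = V * (D (S i ×ˢ (univ : Set Bool))).toReal := by
          rw [hNt f hf.1 i, hTiV]
        rw [hNt_i, add_div, mul_div_cancel_right₀ _ (ne_of_gt (hwQ i).2)]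
        have hq : 0 < ε * (D ((S i ∩ Flt) ×ˢ ({true} : Set Bool))).toReal
            / (D (S i ×ˢ (univ : Set Bool))).toReal :=
          div_pos (mul_pos hε_pos (hQpos i)) (hwQ i).2
        linarith
      · rw [hpieceB i hi {true} (measurableSet_singleton _), mul_div_assoc]
        have hTi : (∫ z in S i ×ˢ ({true} : Set Bool), f z.1 ∂D)
            / (D (S i ×ˢ (univ : Set Bool))).toReal = tpcCond D (S i) f :=
          (htpcCond f hf.1 i).symm
        rw [hTi]
        have h1 : δ * tpcCond D (S i) f ≤ δ := mul_le_of_le_one_right hδ0 (hT01 i).2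
        have h2 : gap ≤ tpcCond D (S i) f - V := by
          have h3 := hjg' i
          rw [← hgapdef, if_neg hi] at h3
          exact h3
        nlinarith
    -- contradiction with max-min optimality of f
    obtain ⟨i₁, hmin₁⟩ := fin_min_exists hm (fun i => tpcCond D (S i) h₂)
    have he₁ : iInf (fun i => tpcCond D (S i) h₂) = tpcCond D (S i₁) h₂ :=
      fin_iInf_eq hm _ i₁ hmin₁
    have hle := hf.2.2 h₂ hh₂F hh₂cap
    rw [he₁, hinf_f] at hle
    exact absurd hle (not_le.mpr (hT'gt i₁))
  -- conclusions
  have hfinf : (⨅ i, tpcCond D (S i) f) = tpc D f := hEO_inf f hf.1 hfEO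
  have hhinf : (⨅ i, tpcCond D (S i) h) = tpc D h := hEO_inf h hhF hhEO
  have hfh : tpc D f ≤ tpc D h := hhmax f hf.1 hfEO hf.2.1
  have hhf : tpc D h ≤ tpc D f := by
    have h2 := hf.2.2 h hhF hhcap
    rw [hhinf, hfinf] at h2
    exact h2
  have htpceq : tpc D f = tpc D h := le_antisymm hfh hhf
  refine ⟨hfEO, ?_, ⟨hhF, hhcap, ?_⟩, ?_⟩
  · intro h' hh'F hh'EO hh'cap
    have h2 := hf.2.2 h' hh'F hh'cap
    rw [hfinf] at h2
    calc tpc D h' = ⨅ i, tpcCond D (S i) h' := (hEO_inf h' hh'F hh'EO).symm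
      _ ≤ tpc D f := h2
  · intro h' hh'F hh'cap
    calc (⨅ i, tpcCond D (S i) h') ≤ ⨅ i, tpcCond D (S i) f := hf.2.2 h' hh'F hh'cap
      _ = tpc D f := hfinf
      _ = tpc D h := htpceq
      _ = ⨅ i, tpcCond D (S i) h := hhinf.symm
  · rw [hfinf, hhinf]
    exact htpceq


end FairAlloc

end
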